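/- If V is a basic computability model in which there is no overuniversal V-function for the set of all unary V-functions, then the IPC-derivable sentence ∀x(Q(x) → ∀y(R(x,y) → ∃z P(x,y,z))) → ∀y∀x(Q(x) ∧ R(x,y) → ∃z P(x,y,z)) is not weakly V-realizable in the domain ℕ; in particular, Intuitionistic Predicate Calculus is not sound with respect to absolute V-realizability over all domains. -/
import Mathlib


namespace GenReal

/-- An `n`-ary partial number-theoretic function. -/
abbrev PFn (n : ℕ) := (Fin n → ℕ) → Part ℕ

/-- Combine a vector of partial values into a partial vector of values. -/
def vecPart {n : ℕ} (f : Fin n → Part ℕ) : Part (Fin n → ℕ) :=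
  ⟨∀ i, (f i).Dom, fun h i => (f i).get (h i)⟩

/-- A set `V` of partial number-theoretic functions presented by a numbering:
a pairing bijection `c` with unpairing functions `p1`, `p2`, index sets `Idx n ⊆ ℕ`
and for each arity `n` a numbering `e ↦ φ n e` of the `n`-ary `V`-functions. -/
structure Numbering where
  c : ℕ → ℕ → ℕ
  p1 : ℕ → ℕ
  p2 : ℕ → ℕ
  cBij : Function.Bijective fun p : ℕ × ℕ => c p.1 p.2
  p1c : ∀ a b, p1 (c a b) = a
  p2c : ∀ a b, p2 (c a b) = b
  Idx : ℕ → Set ℕ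
  φ : (n : ℕ) → ℕ → PFn n

namespace Numbering

variable (V : Numbering)

/-- `p` is an `n`-ary `V`-function, i.e. it has an index. -/
def IsV (n : ℕ) (p : PFn n) : Prop := ∃ e ∈ V.Idx n, ∀ x, V.φ n e x = p x

/-- (BF): projections, the pairing `c` and the unpairings `p1`, `p2` are `V`-functions. -/
def BF : Prop :=
  (∀ (n : ℕ) (i : Fin n), V.IsV n fun x => Part.some (x i)) ∧
  (V.IsV 2 fun x => Part.some (V.c (x 0) (x 1))) ∧
  (V.IsV 1 fun x => Part.some (V.p1 (x 0))) ∧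
  (V.IsV 1 fun x => Part.some (V.p2 (x 0)))

/-- (Cm): composition of `V`-functions is a `V`-function, with an index obtainable
by a `V`-function. -/
def Cm : Prop :=
  ∀ (n : ℕ) (m : Fin n → ℕ),
    ∃ s : PFn (n + 1), V.IsV (n + 1) s ∧
      ∀ e ∈ V.Idx n, ∀ es : Fin n → ℕ, (∀ i, es i ∈ V.Idx (m i)) →
        ∃ v, s (Fin.cons e es) = Part.some v ∧ v ∈ V.Idx (Finset.univ.sup m) ∧
          ∀ x : Fin (Finset.univ.sup m) → ℕ,
            V.φ (Finset.univ.sup m) v x =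
              (vecPart fun i => V.φ (m i) (es i)
                  fun j => x (Fin.castLE (Finset.le_sup (Finset.mem_univ i)) j)).bind
                (V.φ n e)

/-- (Cn): every constant (0-ary) function is a `V`-function with an index obtainable
by a `V`-function. -/
def Cn : Prop :=
  ∃ s : PFn 1, V.IsV 1 s ∧
    ∀ k : ℕ, ∃ v, s ![k] = Part.some v ∧ v ∈ V.Idx 0 ∧
      ∀ x : Fin 0 → ℕ, V.φ 0 v x = Part.some k

/-- (Cs): an index of a "conditional function" (case distinction on whether the last
argument is zero) can be obtained by a `V`-function. -/
def Cs : Prop :=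
  ∀ n : ℕ, ∃ s : PFn 2, V.IsV 2 s ∧
    ∀ e₁ ∈ V.Idx n, ∀ e₂ ∈ V.Idx n,
      ∃ v, s ![e₁, e₂] = Part.some v ∧ v ∈ V.Idx (n + 1) ∧
        ∀ x : Fin (n + 1) → ℕ,
          V.φ (n + 1) v x =
            if x (Fin.last n) = 0 then V.φ n e₁ (Fin.init x) else V.φ n e₂ (Fin.init x)

/-- `V` is a basic computability model. -/
def Basic : Prop := V.BF ∧ V.Cm ∧ V.Cn ∧ V.Cs

/-- `u` is overuniversal for the set of all `n`-ary `V`-functions. -/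
def Overuniversal (n : ℕ) (u : PFn (n + 1)) : Prop :=
  ∀ e ∈ V.Idx n, ∀ a : Fin n → ℕ, (V.φ n e a).Dom → u (Fin.cons e a) = V.φ n e a

/-- (U): there is an overuniversal `V`-function for the set of all unary `V`-functions. -/
def U : Prop := ∃ u : PFn 2, V.IsV 2 u ∧ V.Overuniversal 1 u

/-- `V` is an intuitionistic computability model. -/
def Intu : Prop := V.Basic ∧ V.U

end Numbering

end GenReal

namespace GenReal

/-- Formulas of the language of IPC (predicate symbols of every arity indexed by
naturals; terms are variables, indexed by naturals). -/
inductive Fml where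
  | bot : Fml
  | top : Fml
  | pred (P : ℕ) (n : ℕ) (ts : Fin n → ℕ) : Fml
  | and (A B : Fml) : Fml
  | or (A B : Fml) : Fml
  | imp (A B : Fml) : Fml
  | all (x : ℕ) (A : Fml) : Fml
  | ex (x : ℕ) (A : Fml) : Fml

namespace Fml

/-- Size of a formula (used as fuel for the realizability recursion). -/
def size : Fml → ℕ
  | bot => 1
  | top => 1
  | pred _ _ _ => 1
  | and A B => A.size + B.size + 1
  | or A B => A.size + B.size + 1
  | imp A B => A.size + B.size + 1
  | all _ A => A.size + 1
  | ex _ A => A.size + 1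

/-- Strip the maximal prefix of universal quantifiers. -/
def strip : Fml → List ℕ × Fml
  | all x A => (x :: (strip A).1, (strip A).2)
  | A => ([], A)

end Fml

/-- `x` occurs free in a formula. -/
def FreeIn (x : ℕ) : Fml → Prop
  | Fml.bot => False
  | Fml.top => False
  | Fml.pred _ _ ts => ∃ i, ts i = x
  | Fml.and A B => FreeIn x A ∨ FreeIn x B
  | Fml.or A B => FreeIn x A ∨ FreeIn x B
  | Fml.imp A B => FreeIn x A ∨ FreeIn x B
  | Fml.all z A => x ≠ z ∧ FreeIn x A
  | Fml.ex z A => x ≠ z ∧ FreeIn x A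

/-- A sentence: a formula with no free variables. -/
def Fml.Closed (A : Fml) : Prop := ∀ x, ¬ FreeIn x A

/-- An evaluation: each `n`-ary predicate symbol gets a generalized predicate,
i.e. a map from `n`-tuples to sets of natural numbers. -/
abbrev Eval := ℕ → (n : ℕ) → (Fin n → ℕ) → Set ℕ

/-- Update an environment at a list of variables by a list of values
(later, i.e. inner, updates override earlier ones). -/
def updEnv : (ℕ → ℕ) → List ℕ → List ℕ → (ℕ → ℕ)
  | ρ, x :: xs, a :: as => updEnv (Function.update ρ x a) xs as
  | ρ, _, _ => ρ

/-- Fueled definition of `V`-realizability of a formula over an evaluation `f`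
with domain `M`, relative to an environment `ρ` assigning elements of `M`
to the variables. -/
def RzF (V : Numbering) (M : Set ℕ) (f : Eval) : ℕ → Fml → (ℕ → ℕ) → ℕ → Prop
  | 0, _, _, _ => False
  | _ + 1, Fml.bot, _, _ => False
  | _ + 1, Fml.top, _, _ => True
  | _ + 1, Fml.pred P n ts, ρ, e => e ∈ f P n fun i => ρ (ts i)
  | k + 1, Fml.and A B, ρ, e => RzF V M f k A ρ (V.p1 e) ∧ RzF V M f k B ρ (V.p2 e)
  | k + 1, Fml.or A B, ρ, e =>
      (V.p1 e = 0 ∧ RzF V M f k A ρ (V.p2 e)) ∨ (V.p1 e = 1 ∧ RzF V M f k B ρ (V.p2 e))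
  | k + 1, Fml.imp A B, ρ, e =>
      e ∈ V.Idx 1 ∧ ∀ s : ℕ, RzF V M f k A ρ s →
        ∃ v, V.φ 1 e ![s] = Part.some v ∧ RzF V M f k B ρ v
  | k + 1, Fml.ex x A, ρ, e =>
      V.p1 e ∈ M ∧ RzF V M f k A (Function.update ρ x (V.p1 e)) (V.p2 e)
  | k + 1, Fml.all x A, ρ, e =>
      match Fml.strip A with
      | (ys, Fml.imp B C) =>
          e ∈ V.Idx ((x :: ys).length + 1) ∧
            ∀ a : Fin (x :: ys).length → ℕ, (∀ i, a i ∈ M) → ∀ s : ℕ,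
              RzF V M f k B (updEnv ρ (x :: ys) (List.ofFn a)) s →
                ∃ v, V.φ ((x :: ys).length + 1) e (Fin.snoc a s) = Part.some v ∧
                  RzF V M f k C (updEnv ρ (x :: ys) (List.ofFn a)) v
      | (ys, D) =>
          e ∈ V.Idx ((x :: ys).length + 1) ∧
            ∀ a : Fin (x :: ys).length → ℕ, (∀ i, a i ∈ M) → ∀ s : ℕ,
              ∃ v, V.φ ((x :: ys).length + 1) e (Fin.snoc a s) = Part.some v ∧
                RzF V M f k D (updEnv ρ (x :: ys) (List.ofFn a)) v

/-- `e` `V`-realizes the formula `A` on the evaluation `f` with domain `M`,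
relative to the environment `ρ`. -/
def Rz (V : Numbering) (M : Set ℕ) (f : Eval) (A : Fml) (ρ : ℕ → ℕ) (e : ℕ) : Prop :=
  RzF V M f (A.size + 1) A ρ e

end GenReal

namespace GenReal

namespace Fml

/-- Substitution `A[t/y]` of the term (variable) `t` for the free occurrences of `y`. -/
def subst : Fml → ℕ → ℕ → Fml
  | bot, _, _ => bot
  | top, _, _ => top
  | pred P n ts, y, t => pred P n fun i => if ts i = y then t else ts i
  | and A B, y, t => and (A.subst y t) (B.subst y t)
  | or A B, y, t => or (A.subst y t) (B.subst y t)
  | imp A B, y, t => imp (A.subst y t) (B.subst y t)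
  | all z A, y, t => if z = y then all z A else all z (A.subst y t)
  | ex z A, y, t => if z = y then ex z A else ex z (A.subst y t)

end Fml

/-- The term (variable) `t` is free for `y` in the formula. -/
def FreeFor (t y : ℕ) : Fml → Prop
  | Fml.and A B => FreeFor t y A ∧ FreeFor t y B
  | Fml.or A B => FreeFor t y A ∧ FreeFor t y B
  | Fml.imp A B => FreeFor t y A ∧ FreeFor t y B
  | Fml.all z A => (¬ FreeIn y (Fml.all z A)) ∨ (z ≠ t ∧ FreeFor t y A)
  | Fml.ex z A => (¬ FreeIn y (Fml.ex z A)) ∨ (z ≠ t ∧ FreeFor t y A)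
  | _ => True

/-- Derivability in Intuitionistic Predicate Calculus (Hilbert-style, axioms A1–A14,
modus ponens and generalization). -/
inductive Deriv : Fml → Prop
  | a1 : Deriv Fml.top
  | a2 (A B : Fml) : Deriv (A.imp (B.imp A))
  | a3 (A B C : Fml) : Deriv ((A.imp (B.imp C)).imp ((A.imp B).imp (A.imp C)))
  | a4 (A B : Fml) : Deriv (A.imp (B.imp (A.and B)))
  | a5 (A B : Fml) : Deriv ((A.and B).imp A)
  | a6 (A B : Fml) : Deriv ((A.and B).imp B)
  | a7 (A B C : Fml) : Deriv ((A.imp C).imp ((B.imp C).imp ((A.or B).imp C)))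
  | a8 (A B : Fml) : Deriv (A.imp (A.or B))
  | a9 (A B : Fml) : Deriv (B.imp (A.or B))
  | a10 (A : Fml) : Deriv (Fml.bot.imp A)
  | a11 (A : Fml) (y t : ℕ) : FreeFor t y A → Deriv ((Fml.all y A).imp (A.subst y t))
  | a12 (A : Fml) (y t : ℕ) : FreeFor t y A → Deriv ((A.subst y t).imp (Fml.ex y A))
  | a13 (A B : Fml) (x : ℕ) : ¬ FreeIn x B →
      Deriv ((Fml.all x (B.imp A)).imp (B.imp (Fml.all x A)))
  | a14 (A B : Fml) (x : ℕ) : ¬ FreeIn x B →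
      Deriv ((Fml.all x (A.imp B)).imp ((Fml.ex x A).imp B))
  | mp (A B : Fml) : Deriv (A.imp B) → Deriv A → Deriv B
  | gen (A : Fml) (y : ℕ) : Deriv A → Deriv (Fml.all y A)

/-- The formula of condition (iii) of the main theorem:
`∀x(Q(x) → ∀y(R(x,y) → ∃z P(x,y,z))) → ∀y∀x(Q(x) ∧ R(x,y) → ∃z P(x,y,z))`,
with `x`, `y`, `z` the variables `0`, `1`, `2` and `Q`, `R`, `P` the predicate
symbols `0`, `1`, `2` of arities `1`, `2`, `3`. -/
def keyFml : Fml :=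
  Fml.imp
    (Fml.all 0 (Fml.imp (Fml.pred 0 1 ![0])
      (Fml.all 1 (Fml.imp (Fml.pred 1 2 ![0, 1]) (Fml.ex 2 (Fml.pred 2 3 ![0, 1, 2]))))))
    (Fml.all 1 (Fml.all 0 (Fml.imp ((Fml.pred 0 1 ![0]).and (Fml.pred 1 2 ![0, 1]))
      (Fml.ex 2 (Fml.pred 2 3 ![0, 1, 2])))))

/-- A sentence is weakly `V`-realizable in the domain `ℕ` if for every
`ℕ`-evaluation some number realizes it. -/
def WeakRealizableNat (V : Numbering) (A : Fml) : Prop :=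
  ∀ f : Eval, ∃ e : ℕ, Rz V Set.univ f A (fun _ => 0) e

/-- A sentence is absolutely `V`-realizable over all domains if a single number
realizes it on every evaluation over every nonempty domain. -/
def AbsRealizable (V : Numbering) (A : Fml) : Prop :=
  ∃ e : ℕ, ∀ (M : Set ℕ), M.Nonempty → ∀ (f : Eval) (ρ : ℕ → ℕ),
    (∀ x, ρ x ∈ M) → Rz V M f A ρ e

end GenReal

namespace GenReal

lemma vecPart_eq_some {n : ℕ} {f : Fin n → Part ℕ} {g : Fin n → ℕ}
    (h : ∀ i, f i = Part.some (g i)) : vecPart f = Part.some g := by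
  have hd : ∀ i, (f i).Dom := fun i => by rw [h i]; trivial
  have : vecPart f = Part.some (fun i => (f i).get (hd i)) :=
    Part.eq_some_iff.2 ⟨hd, rfl⟩
  rw [this]; congr 1; funext i; simp [h i]

lemma fin1_eta (a : Fin 1 → ℕ) : a = ![a 0] := by
  funext i; fin_cases i; rfl

lemma snoc1 (a : Fin 1 → ℕ) (t : ℕ) : Fin.snoc a t = ![a 0, t] := by
  funext i; fin_cases i <;> simp [Fin.snoc] <;> rfl

lemma snoc2 (a : Fin 2 → ℕ) (t : ℕ) : Fin.snoc a t = ![a 0, a 1, t] := by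
  funext i; fin_cases i <;> simp [Fin.snoc] <;> rfl

lemma cons2 (e : ℕ) (a : Fin 1 → ℕ) : Fin.cons e a = ![e, a 0] := by
  funext i; fin_cases i <;> simp

def myEval (V : Numbering) : Eval := fun P n =>
  match P, n with
  | 0, 1 => fun ts => {_r | ts 0 ∈ V.Idx 1}
  | 1, 2 => fun ts => {_r | (V.φ 1 (ts 0) ![ts 1]).Dom}
  | 2, 3 => fun ts => {_r | V.φ 1 (ts 0) ![ts 1] = Part.some (ts 2)}
  | _, _ => fun _ => ∅

variable (V : Numbering)

def RzC (a0 v : ℕ) : Prop :=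
  v ∈ V.Idx 2 ∧ ∀ b : Fin 1 → ℕ, (∀ i, b i ∈ (Set.univ : Set ℕ)) → ∀ t' : ℕ,
    (V.φ 1 a0 ![b 0]).Dom → ∃ w, V.φ 2 v (Fin.snoc b t') = Part.some w ∧
      (V.p1 w ∈ (Set.univ : Set ℕ) ∧ V.φ 1 a0 ![b 0] = Part.some (V.p1 w))

def RzA0 (s : ℕ) : Prop :=
  s ∈ V.Idx 2 ∧ ∀ a : Fin 1 → ℕ, (∀ i, a i ∈ (Set.univ : Set ℕ)) → ∀ t : ℕ,
    a 0 ∈ V.Idx 1 → ∃ v, V.φ 2 s (Fin.snoc a t) = Part.some v ∧ RzC V (a 0) v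

def RzB0 (v : ℕ) : Prop :=
  v ∈ V.Idx 3 ∧ ∀ a : Fin 2 → ℕ, (∀ i, a i ∈ (Set.univ : Set ℕ)) → ∀ s : ℕ,
    (a 1 ∈ V.Idx 1 ∧ (V.φ 1 (a 1) ![a 0]).Dom) →
      ∃ w, V.φ 3 v (Fin.snoc a s) = Part.some w ∧
        (V.p1 w ∈ (Set.univ : Set ℕ) ∧ V.φ 1 (a 1) ![a 0] = Part.some (V.p1 w))

theorem rz_key_iff (ρ : ℕ → ℕ) (e : ℕ) :
    Rz V Set.univ (myEval V) keyFml ρ e ↔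
      (e ∈ V.Idx 1 ∧ ∀ s : ℕ, RzA0 V s →
        ∃ v, V.φ 1 e ![s] = Part.some v ∧ RzB0 V v) := Iff.rfl

variable (V : Numbering)

lemma hasConst (hproj : ∀ (n : ℕ) (i : Fin n), V.IsV n fun x => Part.some (x i))
    (hCm : V.Cm) (hCn : V.Cn) (k : ℕ) :
    ∃ ck ∈ V.Idx 2, ∀ x : Fin 2 → ℕ, V.φ 2 ck x = Part.some k := by
  obtain ⟨p0_2, hp0_2I, hp0_2⟩ := hproj 2 0
  obtain ⟨p1_2, hp1_2I, hp1_2⟩ := hproj 2 1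
  obtain ⟨sC, _, hsC⟩ := hCn
  obtain ⟨zk, _, hzkI, hzk⟩ := hsC k
  obtain ⟨s20, _, h20⟩ := hCm 2 ![2, 0]
  obtain ⟨v, _, hvI, hvEq⟩ := h20 p1_2 hp1_2I ![p0_2, zk]
    (by intro i; fin_cases i <;> simpa)
  refine ⟨v, hvI, ?_⟩
  intro x
  have h := hvEq x
  rw [vecPart_eq_some (g := ![x 0, k]) ?_] at h
  · have h2 : V.φ 2 v x = (Part.some ![x 0, k]).bind (V.φ 2 p1_2) := h
    rw [h2, Part.bind_some, hp1_2]; rfl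
  · intro i
    fin_cases i
    · exact hp0_2 _
    · exact hzk _
variable (V : Numbering)

lemma weak_to_U (hV : V.Basic) (hW : WeakRealizableNat V keyFml) : V.U := by
  obtain ⟨⟨hproj, hc, hp1, _⟩, hCm, hCn, _⟩ := hV
  obtain ⟨cI, hcI, hcEq⟩ := hc
  obtain ⟨p1I, hp1I, hp1Eq⟩ := hp1
  obtain ⟨p0_1, hp0_1I, hp0_1⟩ := hproj 1 0
  obtain ⟨p0_2, hp0_2I, hp0_2⟩ := hproj 2 0
  obtain ⟨p1_2, hp1_2I, hp1_2⟩ := hproj 2 1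
  obtain ⟨sC, _, hsC⟩ := id hCn
  obtain ⟨z0, _, hz0I, hz0⟩ := hsC 0
  -- q : index of t ↦ some (c t 0)
  obtain ⟨s10, _, h10⟩ := hCm 2 ![1, 0]
  obtain ⟨q, _, hqI, hqEq⟩ := h10 cI hcI ![p0_1, z0] (by intro i; fin_cases i <;> simpa)
  have hqI' : q ∈ V.Idx 1 := hqI
  have hq : ∀ t, V.φ 1 q ![t] = Part.some (V.c t 0) := by
    intro t
    have h := hqEq ![t]
    rw [vecPart_eq_some (g := ![t, 0]) ?_] at h
    · have h2 : V.φ 1 q ![t] = (Part.some ![t, 0]).bind (V.φ 2 cI) := h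
      rw [h2, Part.bind_some, hcEq]; rfl
    · intro i; fin_cases i
      · exact hp0_1 _
      · exact hz0 _
  -- S : the composition function for n=1, m=![2]
  obtain ⟨S, hSV, hS⟩ := hCm 1 ![2]
  obtain ⟨SI, hSI, hSEq⟩ := hSV
  -- inner composition: a ∈ Idx 1 ↦ index of (x ↦ φ 1 a ![x 0])
  have hv3 : ∀ a ∈ V.Idx 1, ∃ v3, S ![a, p0_2] = Part.some v3 ∧ v3 ∈ V.Idx 2 ∧
      ∀ x : Fin 2 → ℕ, V.φ 2 v3 x = V.φ 1 a ![x 0] := by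
    intro a ha
    obtain ⟨v3, hv3s, hv3I, hv3Eq⟩ := hS a ha ![p0_2] (by intro i; fin_cases i; simpa)
    refine ⟨v3, hv3s, hv3I, ?_⟩
    intro x
    have h := hv3Eq x
    rw [vecPart_eq_some (g := ![x 0]) ?_] at h
    · have h2 : V.φ 2 v3 x = (Part.some ![x 0]).bind (V.φ 1 a) := h
      rw [h2, Part.bind_some]
    · intro i; fin_cases i; exact hp0_2 _
  -- outer composition: compose q after v3
  have hv4 : ∀ v3 ∈ V.Idx 2, ∃ v4, S ![q, v3] = Part.some v4 ∧ v4 ∈ V.Idx 2 ∧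
      ∀ x : Fin 2 → ℕ, ∀ t, V.φ 2 v3 x = Part.some t →
        V.φ 2 v4 x = Part.some (V.c t 0) := by
    intro v3 hv3I
    obtain ⟨v4, hv4s, hv4I, hv4Eq⟩ := hS q hqI' ![v3] (by intro i; fin_cases i; simpa)
    refine ⟨v4, hv4s, hv4I, ?_⟩
    intro x t ht
    have h := hv4Eq x
    rw [vecPart_eq_some (g := ![t]) ?_] at h
    · have h2 : V.φ 2 v4 x = (Part.some ![t]).bind (V.φ 1 q) := h
      rw [h2, Part.bind_some, hq]
    · intro i; fin_cases i; exact ht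
  -- binary constants with values q and p0_2
  obtain ⟨cQ, hcQI, hcQEq⟩ := hasConst V hproj hCm hCn q
  obtain ⟨cP, hcPI, hcPEq⟩ := hasConst V hproj hCm hCn p0_2
  -- composition instance for n=2, m=![2,2]
  obtain ⟨s22, _, h22⟩ := hCm 2 ![2, 2]
  -- T : binary V-function x ↦ S ![x 0, p0_2]
  obtain ⟨T, _, hTI, hTEq⟩ := h22 SI hSI ![p0_2, cP]
    (by intro i; fin_cases i <;> simpa)
  have hT : ∀ x : Fin 2 → ℕ, V.φ 2 T x = S ![x 0, p0_2] := by
    intro x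
    have h := hTEq x
    rw [vecPart_eq_some (g := ![x 0, p0_2]) ?_] at h
    · have h2 : V.φ 2 T x = (Part.some ![x 0, p0_2]).bind (V.φ 2 SI) := h
      rw [h2, Part.bind_some, hSEq]
    · intro i; fin_cases i
      · exact hp0_2 _
      · exact hcPEq _
  -- s₀ : binary V-function x ↦ S ![q, value of T x]
  obtain ⟨s0, _, hs0I, hs0Eq⟩ := h22 SI hSI ![cQ, T]
    (by intro i; fin_cases i <;> simpa)
  have hs0 : ∀ x : Fin 2 → ℕ, ∀ t, V.φ 2 T x = Part.some t →
      V.φ 2 s0 x = S ![q, t] := by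
    intro x t ht
    have h := hs0Eq x
    rw [vecPart_eq_some (g := ![q, t]) ?_] at h
    · have h2 : V.φ 2 s0 x = (Part.some ![q, t]).bind (V.φ 2 SI) := h
      rw [h2, Part.bind_some, hSEq]
    · intro i; fin_cases i
      · exact hcQEq _
      · exact ht
  -- s0 realizes A0
  have hA0 : RzA0 V s0 := by
    refine ⟨hs0I, ?_⟩
    intro a _ t ha0
    obtain ⟨v3, hv3s, hv3I, hv3Eq⟩ := hv3 (a 0) ha0
    obtain ⟨v4, hv4s, hv4I, hv4Eq⟩ := hv4 v3 hv3I
    refine ⟨v4, ?_, hv4I, ?_⟩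
    · rw [snoc1]
      rw [hs0 ![a 0, t] v3 ?_]
      · exact hv4s
      · rw [hT]
        have : (![a 0, t] : Fin 2 → ℕ) 0 = a 0 := rfl
        rw [this, hv3s]
    · -- RzC
      intro b _ t' hdom
      set w' := (V.φ 1 (a 0) ![b 0]).get hdom with hw'
      have hsome : V.φ 1 (a 0) ![b 0] = Part.some w' := (Part.some_get hdom).symm
      refine ⟨V.c w' 0, ?_, trivial, ?_⟩
      · rw [snoc1]
        apply hv4Eq ![b 0, t'] w'
        rw [hv3Eq]
        exact hsome
      · rw [V.p1c, hsome]
  -- get the realizer of keyFml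
  obtain ⟨e, he⟩ := hW (myEval V)
  rw [rz_key_iff] at he
  obtain ⟨_, hkey⟩ := he
  obtain ⟨v0, _, hv0I, hB0⟩ := hkey s0 hA0
  -- build u
  obtain ⟨s222, _, h222⟩ := hCm 3 ![2, 2, 2]
  obtain ⟨v1, _, hv1I, hv1Eq⟩ := h222 v0 hv0I ![p1_2, p0_2, p0_2]
    (by intro i; fin_cases i <;> simpa)
  have hv1 : ∀ x : Fin 2 → ℕ, V.φ 2 v1 x = V.φ 3 v0 ![x 1, x 0, x 0] := by
    intro x
    have h := hv1Eq x
    rw [vecPart_eq_some (g := ![x 1, x 0, x 0]) ?_] at h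
    · have h2 : V.φ 2 v1 x = (Part.some ![x 1, x 0, x 0]).bind (V.φ 3 v0) := h
      rw [h2, Part.bind_some]
    · intro i; fin_cases i
      · exact hp1_2 _
      · exact hp0_2 _
      · exact hp0_2 _
  obtain ⟨v2, _, hv2I, hv2Eq⟩ := hS p1I hp1I ![v1] (by intro i; fin_cases i; simpa)
  have hv2 : ∀ x : Fin 2 → ℕ, ∀ t, V.φ 2 v1 x = Part.some t →
      V.φ 2 v2 x = Part.some (V.p1 t) := by
    intro x t ht
    have h := hv2Eq x
    rw [vecPart_eq_some (g := ![t]) ?_] at h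
    · have h2 : V.φ 2 v2 x = (Part.some ![t]).bind (V.φ 1 p1I) := h
      rw [h2, Part.bind_some, hp1Eq]; rfl
    · intro i; fin_cases i; exact ht
  -- u := φ 2 v2 is overuniversal
  refine ⟨V.φ 2 v2, ⟨v2, hv2I, fun _ => rfl⟩, ?_⟩
  intro e' he' a hdom
  have hdom' : (V.φ 1 e' ![a 0]).Dom := by rw [← fin1_eta]; exact hdom
  obtain ⟨w, hw, _, hw2⟩ := hB0 ![a 0, e'] (fun _ => trivial) e' ⟨he', hdom'⟩
  rw [snoc2] at hw
  have hx : V.φ 2 v1 (Fin.cons e' a) = Part.some w := by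
    rw [hv1, cons2]
    have h0 : (![e', a 0] : Fin 2 → ℕ) 0 = e' := rfl
    have h1 : (![e', a 0] : Fin 2 → ℕ) 1 = a 0 := rfl
    rw [h0, h1]
    exact hw
  rw [hv2 (Fin.cons e' a) w hx, fin1_eta a]
  have hw2' : V.φ 1 e' ![a 0] = Part.some (V.p1 w) := hw2
  exact hw2'.symm

lemma dSyl {A B C : Fml} (h1 : Deriv (A.imp B)) (h2 : Deriv (B.imp C)) :
    Deriv (A.imp C) := by
  have h3 : Deriv (A.imp (B.imp C)) := Deriv.mp _ _ (Deriv.a2 _ A) h2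
  exact Deriv.mp _ _ (Deriv.mp _ _ (Deriv.a3 A B C) h3) h1

lemma dImpUnder (A : Fml) {B C : Fml} (h : Deriv (B.imp C)) :
    Deriv ((A.imp B).imp (A.imp C)) :=
  Deriv.mp _ _ (Deriv.a3 A B C) (Deriv.mp _ _ (Deriv.a2 _ A) h)

lemma dFlip {A B C : Fml} (h : Deriv (A.imp (B.imp C))) : Deriv (B.imp (A.imp C)) :=
  dSyl (Deriv.a2 B A) (Deriv.mp _ _ (Deriv.a3 A B C) h)

lemma dMpUnder {A X Y : Fml} (h1 : Deriv (A.imp (X.imp Y))) (h2 : Deriv (A.imp X)) :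
    Deriv (A.imp Y) :=
  Deriv.mp _ _ (Deriv.mp _ _ (Deriv.a3 A X Y) h1) h2

lemma subst_self (A : Fml) (y : ℕ) : A.subst y y = A := by
  induction A with
  | bot => rfl
  | top => rfl
  | pred P n ts =>
      simp only [Fml.subst]
      congr 1
      funext i
      by_cases h : ts i = y <;> simp [h]
  | and A B ihA ihB => simp [Fml.subst, ihA, ihB]
  | or A B ihA ihB => simp [Fml.subst, ihA, ihB]
  | imp A B ihA ihB => simp [Fml.subst, ihA, ihB]
  | all z A ih => by_cases h : z = y <;> simp [Fml.subst, h, ih]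
  | ex z A ih => by_cases h : z = y <;> simp [Fml.subst, h, ih]

lemma freeFor_self (y : ℕ) (A : Fml) : FreeFor y y A := by
  induction A with
  | bot => trivial
  | top => trivial
  | pred P n ts => trivial
  | and A B ihA ihB => exact ⟨ihA, ihB⟩
  | or A B ihA ihB => exact ⟨ihA, ihB⟩
  | imp A B ihA ihB => exact ⟨ihA, ihB⟩
  | all z A ih =>
      by_cases h : z = y
      · subst h; exact Or.inl (fun hf => hf.1 rfl)
      · exact Or.inr ⟨h, ih⟩
  | ex z A ih =>
      by_cases h : z = y
      · subst h; exact Or.inl (fun hf => hf.1 rfl)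
      · exact Or.inr ⟨h, ih⟩

lemma dAllElim (A : Fml) (y : ℕ) : Deriv ((Fml.all y A).imp A) := by
  have h := Deriv.a11 A y y (freeFor_self y A)
  rwa [subst_self] at h

def Qf : Fml := Fml.pred 0 1 ![0]
def Rf : Fml := Fml.pred 1 2 ![0, 1]
def Ef : Fml := Fml.ex 2 (Fml.pred 2 3 ![0, 1, 2])
def A0f : Fml := Fml.all 0 (Fml.imp Qf (Fml.all 1 (Fml.imp Rf Ef)))
def B1f : Fml := Fml.imp (Qf.and Rf) Ef

lemma notFree0A0 : ¬ FreeIn 0 A0f := by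
  simp [A0f, FreeIn]

lemma notFree1A0 : ¬ FreeIn 1 A0f := by
  simp [A0f, Qf, FreeIn, Fin.exists_fin_one]

lemma deriv_key : Deriv keyFml := by
  have h1 : Deriv (A0f.imp (Fml.imp Qf (Fml.all 1 (Fml.imp Rf Ef)))) := dAllElim _ 0
  have h2 : Deriv ((Fml.all 1 (Fml.imp Rf Ef)).imp (Fml.imp Rf Ef)) := dAllElim _ 1
  have h3 : Deriv (A0f.imp (Qf.imp (Rf.imp Ef))) := dSyl h1 (dImpUnder Qf h2)
  have h4 : Deriv ((Qf.and Rf).imp (A0f.imp (Rf.imp Ef))) :=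
    dSyl (Deriv.a5 Qf Rf) (dFlip h3)
  have h5 : Deriv (A0f.imp ((Qf.and Rf).imp (Rf.imp Ef))) := dFlip h4
  have h6 : Deriv (A0f.imp ((Qf.and Rf).imp Rf)) :=
    Deriv.mp _ _ (Deriv.a2 _ A0f) (Deriv.a6 Qf Rf)
  have h7 : Deriv (A0f.imp (((Qf.and Rf).imp Rf).imp ((Qf.and Rf).imp Ef))) :=
    dSyl h5 (Deriv.a3 (Qf.and Rf) Rf Ef)
  have h8 : Deriv (A0f.imp B1f) := dMpUnder h7 h6
  have h9 := Deriv.gen _ 0 h8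
  have h10 : Deriv (A0f.imp (Fml.all 0 B1f)) :=
    Deriv.mp _ _ (Deriv.a13 B1f A0f 0 notFree0A0) h9
  have h11 := Deriv.gen _ 1 h10
  have h12 : Deriv (A0f.imp (Fml.all 1 (Fml.all 0 B1f))) :=
    Deriv.mp _ _ (Deriv.a13 (Fml.all 0 B1f) A0f 1 notFree1A0) h11
  exact h12

lemma exists_fin3 {p : Fin 3 → Prop} : (∃ i, p i) ↔ p 0 ∨ p 1 ∨ p 2 := by
  constructor
  · rintro ⟨i, hi⟩; fin_cases i <;> tauto
  · rintro (h | h | h) <;> exact ⟨_, h⟩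

set_option maxHeartbeats 1000000 in
lemma key_closed' : keyFml.Closed := by
  intro x
  simp only [keyFml, FreeIn, Fin.exists_fin_one, Fin.exists_fin_two, exists_fin3, not_or, not_and,
    Matrix.cons_val_zero, Matrix.cons_val_one, Matrix.head_cons, Matrix.cons_val_two,
    Matrix.tail_cons]
  constructor <;> intro h <;> omega

/-- if `V` is a basic computability model with no overuniversal
`V`-function for the unary `V`-functions, then the key formula is derivable in IPC
but not weakly `V`-realizable in the domain `ℕ`; in particular IPC is not sound
with respect to absolute `V`-realizability over all domains. -/
theorem stmt19 (V : Numbering) (hV : V.Basic) (hnoU : ¬ V.U) :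
    Deriv keyFml ∧ ¬ WeakRealizableNat V keyFml ∧
      ¬ (∀ Φ : Fml, Φ.Closed → Deriv Φ → AbsRealizable V Φ) := by
  refine ⟨deriv_key, ?_, ?_⟩
  · exact fun hW => hnoU (weak_to_U V hV hW)
  · intro h
    obtain ⟨e, habs⟩ := h keyFml key_closed' deriv_key
    exact (fun hW => hnoU (weak_to_U V hV hW))
      (fun f => ⟨e, habs Set.univ ⟨0, trivial⟩ f (fun _ => 0) (fun _ => trivial)⟩)

end GenReal
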